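/- The group presented by generators a1, a2, a3, a4, a5, a6 with relations: a_i^2 = e for all i; the braid relations a_i a_j a_i = a_j a_i a_j for the pairs (i,j) ∈ {(1,2),(1,4),(1,5),(1,6),(2,3),(2,4),(2,6),(3,4),(3,5),(3,6),(4,5),(5,6)}; the commutation relations [a1,a3] = [a2,a5] = [a4,a6] = e; and the relations a4 = a1 a2 a1, a5 = a3 a4 a3, a6 = a2 a3 a2, a6 = a1 a5 a1, is isomorphic to the symmetric group S4 via the map a1 ↦ (1 3), a2 ↦ (1 2), a3 ↦ (2 4), a4 ↦ (2 3), a5 ↦ (3 4), a6 ↦ (1 4). -/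

import Mathlib

open FreeGroup
open scoped commutatorElement

/-- The relations of the group `G̃` arising from the tetrahedron `T_{(4)}`
(generators `a1,…,a6` are indexed by `Fin 6`, 0-based). -/
def tetraRels : Set (FreeGroup (Fin 6)) :=
  { of (0:Fin 6) ^ 2, of (1:Fin 6) ^ 2, of (2:Fin 6) ^ 2,
    of (3:Fin 6) ^ 2, of (4:Fin 6) ^ 2, of (5:Fin 6) ^ 2,
    -- braid relations a_i a_j a_i = a_j a_i a_j
    of (0:Fin 6) * of 1 * of 0 * (of 1 * of 0 * of 1)⁻¹,
    of (0:Fin 6) * of 3 * of 0 * (of 3 * of 0 * of 3)⁻¹,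
    of (0:Fin 6) * of 4 * of 0 * (of 4 * of 0 * of 4)⁻¹,
    of (0:Fin 6) * of 5 * of 0 * (of 5 * of 0 * of 5)⁻¹,
    of (1:Fin 6) * of 2 * of 1 * (of 2 * of 1 * of 2)⁻¹,
    of (1:Fin 6) * of 3 * of 1 * (of 3 * of 1 * of 3)⁻¹,
    of (1:Fin 6) * of 5 * of 1 * (of 5 * of 1 * of 5)⁻¹,
    of (2:Fin 6) * of 3 * of 2 * (of 3 * of 2 * of 3)⁻¹,
    of (2:Fin 6) * of 4 * of 2 * (of 4 * of 2 * of 4)⁻¹,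
    of (2:Fin 6) * of 5 * of 2 * (of 5 * of 2 * of 5)⁻¹,
    of (3:Fin 6) * of 4 * of 3 * (of 4 * of 3 * of 4)⁻¹,
    of (4:Fin 6) * of 5 * of 4 * (of 5 * of 4 * of 5)⁻¹,
    -- commutation relations [a1,a3] = [a2,a5] = [a4,a6] = e
    ⁅of (0:Fin 6), of 2⁆, ⁅of (1:Fin 6), of 4⁆, ⁅of (3:Fin 6), of 5⁆,
    -- a4 = a1 a2 a1, a5 = a3 a4 a3, a6 = a2 a3 a2, a6 = a1 a5 a1
    of (3:Fin 6) * (of 0 * of 1 * of 0)⁻¹,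
    of (4:Fin 6) * (of 2 * of 3 * of 2)⁻¹,
    of (5:Fin 6) * (of 1 * of 2 * of 1)⁻¹,
    of (5:Fin 6) * (of 0 * of 4 * of 0)⁻¹ }

/-!
The images of `a₂, a₄, a₅` are the Coxeter generators `(1 2), (2 3), (3 4)` of `S₄`, and in `G̃`
these three involutions satisfy the Coxeter relations of type `A₃`, while the remaining relations
express `a₁ = a₂ a₄ a₂`, `a₃ = a₄ a₅ a₄`, `a₆ = a₂ a₃ a₂` through them. A group generated by
`s₁, s₂, s₃` subject to the `A₃` relations has order at most `24`: `⟨s₁, s₂⟩` has at most the six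
elements `1, s₁, s₂, s₁s₂, s₂s₁, s₁s₂s₁`, and its left cosets are permuted by the generators, so
they are among `⟨s₁, s₂⟩, s₃⟨s₁, s₂⟩, s₂s₃⟨s₁, s₂⟩, s₁s₂s₃⟨s₁, s₂⟩`. The map to `S₄` is onto since
the six generators go to the six transpositions, hence it is an isomorphism.
-/

theorem Subgroup.smul_mem_of_mem_closure_of_involutive {G X : Type*} [Group G] [MulAction G X]
    {T : Set G} (hT : ∀ t ∈ T, t⁻¹ = t) {Y : Set X} (hY : ∀ t ∈ T, ∀ y ∈ Y, t • y ∈ Y)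
    {g : G} (hg : g ∈ closure T) {y : X} (hy : y ∈ Y) : g • y ∈ Y := by
  induction hg using closure_induction_left generalizing y with
  | one => rwa [one_smul]
  | mul_left t ht g _ ih => rw [mul_smul]; exact hY t ht _ (ih hy)
  | inv_mul_cancel t ht g _ ih => rw [mul_smul, hT t ht]; exact hY t ht _ (ih hy)

section

open Subgroup
open scoped Classical

variable {G : Type*} [Group G]

theorem eq_mul_mul_of_braid {s t u : G} (hs : s * s = 1)
    (ht : t = u * s * u) (hbraid : u * s * u = s * u * s) : u = s * t * s := by
  rw [ht, hbraid]
  simp only [mul_assoc, hs, mul_one, ← mul_assoc s s, one_mul]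

structure CoxeterA3Relations (s₁ s₂ s₃ : G) : Prop where
  mul_self₁ : s₁ * s₁ = 1
  mul_self₂ : s₂ * s₂ = 1
  mul_self₃ : s₃ * s₃ = 1
  braid₁₂ : s₁ * s₂ * s₁ = s₂ * s₁ * s₂
  braid₂₃ : s₂ * s₃ * s₂ = s₃ * s₂ * s₃
  comm₁₃ : s₁ * s₃ = s₃ * s₁

theorem closure_pair_subset_of_braid {s₁ s₂ : G} (h₁ : s₁ * s₁ = 1) (h₂ : s₂ * s₂ = 1)
    (h₁₂ : s₁ * s₂ * s₁ = s₂ * s₁ * s₂) :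
    (closure {s₁, s₂} : Set G) ⊆ ({1, s₁, s₂, s₁ * s₂, s₂ * s₁, s₁ * s₂ * s₁} : Finset G) := by
  intro g hg
  set Y : Finset G := {1, s₁, s₂, s₁ * s₂, s₂ * s₁, s₁ * s₂ * s₁} with hY
  have hinv : ∀ t ∈ ({s₁, s₂} : Set G), t⁻¹ = t := by
    rintro t (rfl | rfl) <;> exact inv_eq_of_mul_eq_one_right ‹_›
  have cancel₂ (x : G) : x * s₂ * s₂ = x := by rw [mul_assoc, h₂, mul_one]
  have hclosed : ∀ t ∈ ({s₁, s₂} : Set G), ∀ y ∈ (Y : Set G), t • y ∈ (Y : Set G) := by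
    rintro t (rfl | rfl) y hy <;>
    · simp only [hY, Finset.coe_insert, Finset.coe_singleton, Set.mem_insert_iff,
        Set.mem_singleton_iff] at hy
      rcases hy with rfl | rfl | rfl | rfl | rfl | rfl <;>
      simp [hY, ← mul_assoc, h₁, h₂, cancel₂, h₁₂]
  simpa using smul_mem_of_mem_closure_of_involutive hinv hclosed hg (y := 1) (by simp [hY])

variable {s₁ s₂ s₃ : G}

theorem CoxeterA3Relations.mem_image_coe_quotient (h : CoxeterA3Relations s₁ s₂ s₃)
    (hgen : closure {s₁, s₂, s₃} = ⊤) :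
    ∀ q : G ⧸ closure {s₁, s₂}, q ∈ ({1, s₃, s₂ * s₃, s₁ * s₂ * s₃} : Finset G).image (↑) := by
  set H := closure {s₁, s₂}
  have hinv : ∀ t ∈ ({s₁, s₂, s₃} : Set G), t⁻¹ = t := by
    rintro t (rfl | rfl | rfl) <;> apply inv_eq_of_mul_eq_one_right
    exacts [h.mul_self₁, h.mul_self₂, h.mul_self₃]
  have mk_mul_mem {x y : G} (r : G) (hr : r ∈ ({s₁, s₂} : Set G)) (hxy : x = y * r) :
      (x : G ⧸ H) = y := by
    rw [hxy]; exact QuotientGroup.mk_mul_of_mem y (subset_closure hr)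
  -- `fixᵢw` says that `sᵢ` fixes the coset `w H`; every other move of a generator on the four
  -- cosets appends a letter to `w` or cancels one.
  have fix₁₁ : ((s₁ : G) : G ⧸ H) = ((1 : G) : G ⧸ H) := mk_mul_mem s₁ (by simp) (one_mul _).symm
  have fix₂₁ : ((s₂ : G) : G ⧸ H) = ((1 : G) : G ⧸ H) := mk_mul_mem s₂ (by simp) (one_mul _).symm
  have fix₁₃ : ((s₁ * s₃ : G) : G ⧸ H) = (s₃ : G) := mk_mul_mem s₁ (by simp) h.comm₁₃
  have fix₃₂₃ : ((s₃ * s₂ * s₃ : G) : G ⧸ H) = (s₂ * s₃ : G) :=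
    mk_mul_mem s₂ (by simp) h.braid₂₃.symm
  have fix₂₁₂₃ : ((s₂ * s₁ * s₂ * s₃ : G) : G ⧸ H) = (s₁ * s₂ * s₃ : G) :=
    mk_mul_mem s₁ (by simp) (by rw [← h.braid₁₂, mul_assoc _ s₁ s₃, h.comm₁₃]; group)
  have fix₃₁₂₃ : ((s₃ * s₁ * s₂ * s₃ : G) : G ⧸ H) = (s₁ * s₂ * s₃ : G) :=
    mk_mul_mem s₂ (by simp) (by rw [← h.comm₁₃, mul_assoc s₁, mul_assoc s₁, ← h.braid₂₃]; group)
  set Q := ({1, s₃, s₂ * s₃, s₁ * s₂ * s₃} : Finset G).image ((↑) : G → G ⧸ H) with hQ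
  have hclosed :
      ∀ t ∈ ({s₁, s₂, s₃} : Set G), ∀ q ∈ (Q : Set (G ⧸ H)), t • q ∈ (Q : Set (G ⧸ H)) := by
    rintro t (rfl | rfl | rfl) q hq <;>
    · simp only [hQ, Finset.coe_image, Set.mem_image, Finset.coe_insert, Finset.coe_singleton,
        Set.mem_insert_iff, Set.mem_singleton_iff] at hq
      rcases hq with ⟨r, rfl | rfl | rfl | rfl, rfl⟩ <;>
      simp [hQ, ← mul_assoc, h.mul_self₁, h.mul_self₂, h.mul_self₃, fix₁₁, fix₂₁, fix₁₃, fix₃₂₃,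
        fix₂₁₂₃, fix₃₁₂₃]
  intro q
  obtain ⟨g, rfl⟩ := QuotientGroup.mk_surjective q
  simpa using smul_mem_of_mem_closure_of_involutive hinv hclosed (hgen ▸ mem_top g)
    (y := ((1 : G) : G ⧸ H)) (by simp [hQ])

theorem CoxeterA3Relations.finite_and_natCard_le (h : CoxeterA3Relations s₁ s₂ s₃)
    (hgen : closure {s₁, s₂, s₃} = ⊤) : Finite G ∧ Nat.card G ≤ 24 := by
  set H := closure {s₁, s₂}
  have hH := closure_pair_subset_of_braid h.mul_self₁ h.mul_self₂ h.braid₁₂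
  have hQ := h.mem_image_coe_quotient hgen
  have incl_H : Function.Injective (Set.inclusion hH) := Set.inclusion_injective hH
  have proj_Q : Function.Surjective (fun r : (_ : Finset (G ⧸ H)) => (r : G ⧸ H)) :=
    fun q => ⟨⟨q, hQ q⟩, rfl⟩
  have : Finite H := Finite.of_injective _ incl_H
  have : Finite (G ⧸ H) := Finite.of_surjective _ proj_Q
  have card_H : Nat.card H ≤ 6 :=
    (Nat.card_le_card_of_injective _ incl_H).trans
      ((Nat.card_eq_finsetCard _).trans_le Finset.card_le_six)
  have index_H : H.index ≤ 4 :=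
    (Nat.card_le_card_of_surjective _ proj_Q).trans
      ((Nat.card_eq_finsetCard _).trans_le (Finset.card_image_le.trans Finset.card_le_four))
  refine ⟨Finite.of_subgroup_quotient H, ?_⟩
  rw [← H.card_mul_index]
  exact Nat.mul_le_mul card_H index_H
end

namespace TetraPresentation

open Equiv

local notation "G̃" => PresentedGroup tetraRels

def transposition : Fin 6 → Perm (Fin 4) :=
  ![swap 0 2, swap 0 1, swap 1 3, swap 1 2, swap 2 3, swap 0 3]

theorem lift_transposition_eq_one : ∀ r ∈ tetraRels, FreeGroup.lift transposition r = 1 := by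
  simp only [tetraRels, Set.mem_insert_iff, Set.mem_singleton_iff]
  rintro r (rfl | rfl | rfl | rfl | rfl | rfl | rfl | rfl | rfl | rfl | rfl | rfl | rfl | rfl |
    rfl | rfl | rfl | rfl | rfl | rfl | rfl | rfl | rfl | rfl | rfl) <;>
  simp only [_root_.map_mul, _root_.map_pow, _root_.map_inv, commutatorElement_def,
    lift_apply_of] <;>
  decide

def toPerm : G̃ →* Perm (Fin 4) := PresentedGroup.toGroup lift_transposition_eq_one

theorem toPerm_of (i : Fin 6) : toPerm (.of i) = transposition i := PresentedGroup.toGroup.of _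

theorem toPerm_surjective : Function.Surjective toPerm := by
  have swap_mem : ∀ x y : Fin 4, x ≠ y → ∃ i, transposition i = swap x y := by decide
  rw [← MonoidHom.range_eq_top, eq_top_iff, ← Perm.closure_isSwap, Subgroup.closure_le]
  rintro _ ⟨x, y, hxy, rfl⟩
  obtain ⟨i, hi⟩ := swap_mem x y hxy
  exact ⟨.of i, by rw [toPerm_of, hi]⟩

-- `PresentedGroup.of i` is `mk (of i)` by definition, so these equations between words are
-- accepted directly as equations between products of generators of `G̃`.
theorem mk_eq_one (r : FreeGroup (Fin 6)) (h : r ∈ tetraRels := by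
      simp only [tetraRels, Set.mem_insert_iff, Set.mem_singleton_iff, true_or, or_true]) :
    PresentedGroup.mk tetraRels r = 1 :=
  PresentedGroup.one_of_mem h

theorem mk_eq_mk (x y : FreeGroup (Fin 6)) (h : x * y⁻¹ ∈ tetraRels := by
      simp only [tetraRels, Set.mem_insert_iff, Set.mem_singleton_iff, true_or, or_true]) :
    PresentedGroup.mk tetraRels x = PresentedGroup.mk tetraRels y :=
  eq_of_mul_inv_eq_one (mk_eq_one _ h)

theorem of_mul_self (i : Fin 6) : (PresentedGroup.of i : G̃) * .of i = 1 := by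
  rw [← sq]
  fin_cases i
  exacts [mk_eq_one (of 0 ^ 2), mk_eq_one (of 1 ^ 2), mk_eq_one (of 2 ^ 2), mk_eq_one (of 3 ^ 2),
    mk_eq_one (of 4 ^ 2), mk_eq_one (of 5 ^ 2)]

theorem coxeterA3Relations :
    CoxeterA3Relations (PresentedGroup.of 1 : G̃) (.of 3) (.of 4) where
  mul_self₁ := of_mul_self 1
  mul_self₂ := of_mul_self 3
  mul_self₃ := of_mul_self 4
  braid₁₂ := mk_eq_mk (of 1 * of 3 * of 1) (of 3 * of 1 * of 3)
  braid₂₃ := mk_eq_mk (of 3 * of 4 * of 3) (of 4 * of 3 * of 4)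
  comm₁₃ := by
    rw [← commutatorElement_eq_one_iff_mul_comm]
    exact mk_eq_one ⁅(of 1 : FreeGroup (Fin 6)), of 4⁆

theorem of_zero_eq : (PresentedGroup.of 0 : G̃) = .of 1 * .of 3 * .of 1 :=
  eq_mul_mul_of_braid (of_mul_self 1) (mk_eq_mk (of 3) (of 0 * of 1 * of 0))
    (mk_eq_mk (of 0 * of 1 * of 0) (of 1 * of 0 * of 1))

theorem of_two_eq : (PresentedGroup.of 2 : G̃) = .of 3 * .of 4 * .of 3 :=
  eq_mul_mul_of_braid (of_mul_self 3) (mk_eq_mk (of 4) (of 2 * of 3 * of 2))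
    (mk_eq_mk (of 2 * of 3 * of 2) (of 3 * of 2 * of 3))

theorem of_five_eq : (PresentedGroup.of 5 : G̃) = .of 1 * (.of 3 * .of 4 * .of 3) * .of 1 :=
  (mk_eq_mk (of 5) (of 1 * of 2 * of 1)).trans (by rw [← of_two_eq]; rfl)

theorem closure_eq_top : Subgroup.closure {(PresentedGroup.of 1 : G̃), .of 3, .of 4} = ⊤ := by
  set H := Subgroup.closure {(PresentedGroup.of 1 : G̃), .of 3, .of 4}
  have mem₁ : (PresentedGroup.of 1 : G̃) ∈ H := Subgroup.subset_closure (by simp)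
  have mem₃ : (PresentedGroup.of 3 : G̃) ∈ H := Subgroup.subset_closure (by simp)
  have mem₄ : (PresentedGroup.of 4 : G̃) ∈ H := Subgroup.subset_closure (by simp)
  have mem₀ : (PresentedGroup.of 0 : G̃) ∈ H := of_zero_eq ▸ mul_mem (mul_mem mem₁ mem₃) mem₁
  have mem₂ : (PresentedGroup.of 2 : G̃) ∈ H := of_two_eq ▸ mul_mem (mul_mem mem₃ mem₄) mem₃
  have mem₅ : (PresentedGroup.of 5 : G̃) ∈ H :=
    of_five_eq ▸ mul_mem (mul_mem mem₁ (mul_mem (mul_mem mem₃ mem₄) mem₃)) mem₁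
  rw [eq_top_iff, ← PresentedGroup.closure_range_of, Subgroup.closure_le]
  rintro _ ⟨i, rfl⟩
  fin_cases i
  exacts [mem₀, mem₁, mem₂, mem₃, mem₄, mem₅]

theorem toPerm_bijective : Function.Bijective toPerm := by
  obtain ⟨_, card_le⟩ := coxeterA3Relations.finite_and_natCard_le closure_eq_top
  refine toPerm_surjective.bijective_of_nat_card_le (card_le.trans ?_)
  rw [Nat.card_perm, Nat.card_fin]
  decide

end TetraPresentation

/-- The presented group `G̃` of the tetrahedron is isomorphic to `S4` via
`a1 ↦ (1 3)`, `a2 ↦ (1 2)`, `a3 ↦ (2 4)`, `a4 ↦ (2 3)`, `a5 ↦ (3 4)`, `a6 ↦ (1 4)`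
(0-based transpositions below). -/
theorem stmt_4 :
    ∃ φ : PresentedGroup tetraRels ≃* Equiv.Perm (Fin 4),
      φ (PresentedGroup.of 0) = Equiv.swap 0 2 ∧
      φ (PresentedGroup.of 1) = Equiv.swap 0 1 ∧
      φ (PresentedGroup.of 2) = Equiv.swap 1 3 ∧
      φ (PresentedGroup.of 3) = Equiv.swap 1 2 ∧
      φ (PresentedGroup.of 4) = Equiv.swap 2 3 ∧
      φ (PresentedGroup.of 5) = Equiv.swap 0 3 :=
  ⟨.ofBijective _ TetraPresentation.toPerm_bijective, TetraPresentation.toPerm_of 0,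
    TetraPresentation.toPerm_of 1, TetraPresentation.toPerm_of 2, TetraPresentation.toPerm_of 3,
    TetraPresentation.toPerm_of 4, TetraPresentation.toPerm_of 5⟩
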